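/- For δ ∈ (0,1/2), the binary relative entropy satisfies d(1-δ, δ) ≥ log(1/(2.4δ)), where d(x,y) = x·log(x/y) + (1-x)·log((1-x)/(1-y)). -/
import Mathlib


/-- Binary relative entropy `d(x,y) = x log(x/y) + (1-x) log((1-x)/(1-y))`. -/
noncomputable def binaryKL (x y : ℝ) : ℝ :=
  x * Real.log (x / y) + (1 - x) * Real.log ((1 - x) / (1 - y))

private lemma log_ge_aux {x : ℝ} (hx : 0 < x) : 1 - x⁻¹ ≤ Real.log x := by
  have h := Real.log_le_sub_one_of_pos (inv_pos.mpr hx)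
  rw [Real.log_inv] at h
  linarith

/-- For δ ∈ (0,1/2), `d(1-δ, δ) ≥ log(1/(2.4 δ))`. -/
theorem binaryKL_one_sub_ge (δ : ℝ) (hδ0 : 0 < δ) (hδ : δ < 1 / 2) :
    binaryKL (1 - δ) δ ≥ Real.log (1 / (2.4 * δ)) := by
  have h1δ : 0 < 1 - δ := by linarith
  set L2 := Real.log 2 with hL2
  set L3 := Real.log 3 with hL3
  set L5 := Real.log 5 with hL5
  -- rewrite binaryKL
  have key : binaryKL (1 - δ) δ
      = (1 - δ) * (Real.log (1 - δ) - Real.log δ) + δ * (Real.log δ - Real.log (1 - δ)) := by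
    unfold binaryKL
    rw [show (1:ℝ) - (1 - δ) = δ by ring,
      Real.log_div h1δ.ne' hδ0.ne', Real.log_div hδ0.ne' h1δ.ne']
  -- rewrite RHS
  have hrhs : Real.log (1 / (2.4 * δ)) = -(2 * L2 + L3 - L5) - Real.log δ := by
    rw [show (1:ℝ) / (2.4 * δ) = (12/5 * δ)⁻¹ by norm_num, Real.log_inv,
      Real.log_mul (by norm_num) hδ0.ne',
      show (12:ℝ)/5 = 2^2 * 3 / 5 by norm_num,
      Real.log_div (by norm_num) (by norm_num),
      Real.log_mul (by norm_num) (by norm_num), Real.log_pow]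
    push_cast
    ring
  -- tangent-line lower bound for log(1-δ) at 2/3
  have hlb : L2 - L3 + 1 - (2/3) / (1 - δ) ≤ Real.log (1 - δ) := by
    have h := Real.log_le_sub_one_of_pos (show 0 < (2/3) / (1 - δ) by positivity)
    rw [Real.log_div (by norm_num) h1δ.ne', Real.log_div (by norm_num) (by norm_num)] at h
    linarith
  -- tangent-line lower bound for log δ at 1/3
  have hlc : -L3 + 1 - 1 / (3 * δ) ≤ Real.log δ := by
    have h := Real.log_le_sub_one_of_pos (show 0 < (1/3) / δ by positivity)
    rw [Real.log_div (by norm_num) hδ0.ne', Real.log_div (by norm_num) (by norm_num),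
      Real.log_one] at h
    have : (1/3) / δ = 1 / (3 * δ) := by ring
    rw [this] at h
    linarith
  -- numeric bounds
  have hL2l : 0.6931471803 < L2 := Real.log_two_gt_d9
  have hL2u : L2 < 0.6931471808 := Real.log_two_lt_d9
  have h5 : 3 * L5 = 7 * L2 - Real.log (128 / 125) := by
    rw [show (128:ℝ)/125 = 2^7 / 5^3 by norm_num,
      Real.log_div (by norm_num) (by norm_num), Real.log_pow, Real.log_pow]
    push_cast
    ring
  have h128 : (3:ℝ)/128 ≤ Real.log (128 / 125) := by
    have := log_ge_aux (show (0:ℝ) < 128/125 by norm_num)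
    norm_num at this
    linarith
  have hL5u : L5 < 1.60954 := by nlinarith
  -- combine
  rw [key, hrhs, ge_iff_le]
  have hA : (2/3) / (1 - δ) * (1 - δ) = 2/3 := by field_simp
  have hB : 1 / (3 * δ) * δ = 1/3 := by field_simp
  have hd : δ * (1 - δ) > 0 := mul_pos hδ0 h1δ
  nlinarith [mul_le_mul_of_nonneg_left hlb (show (0:ℝ) ≤ 1 - 2*δ by linarith),
    sq_nonneg (δ - 0.3088), mul_pos hδ0 h1δ, hlc]
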